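/- Suppose the dynamics are F(x,a,ε) = b(x,a) + σ(x,a)ε where b and σ are Lipschitz in (x,a) with constants [b]_L and [σ]_L, and ε ~ N(0, I_d). Then (HF) holds with C(ε) = [b]_L + [σ]_L ‖ε‖_d, and ρ_M := E[sup_{1≤m≤M} C(ε^m)] (for i.i.d. copies ε^m of ε) satisfies ρ_M ≤ [b]_L + d[σ]_L √(2 log(2dM)); in particular ρ_M = O(√(log M)) as M → ∞. -/

import Mathlib

/-!
Writing `F(x,a,e) - F(x',a',e) = (b(x,a) - b(x',a')) + (σ(x,a) - σ(x',a')) e` gives (HF) by the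
operator-norm bound. For `ρ_M`, bound `‖ε^m‖ ≤ √d · max_i |ε^m_i|`, so that `ρ_M` is controlled
by the expected maximum of the `dM` standard Gaussians `|ε^m_i|`. Each of them is sub-Gaussian,
and for sub-Gaussian variables Jensen's inequality and a union bound on the moment-generating
function give `exp (t E[max_p |X_p|]) ≤ 2K exp (c t² / 2)` for every `t`, which after optimizing
in `t` is `E[max_p |X_p|] ≤ √(2 c log (2K))`.
-/

open MeasureTheory Filter Real ProbabilityTheory Asymptotics
open scoped NNReal

noncomputable section

/-- Euclidean state/control spaces. -/
abbrev Sp (d : ℕ) : Type := EuclideanSpace ℝ (Fin d)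

lemma hasSubgaussianMGF_of_map_eq_gaussianReal {Ω : Type*} [MeasurableSpace Ω] {P : Measure Ω}
    {X : Ω → ℝ} {v : ℝ≥0} (hX : AEMeasurable X P) (hlaw : P.map X = gaussianReal 0 v) :
    HasSubgaussianMGF X v P := by
  refine (HasSubgaussianMGF.id_map_iff hX).1 ?_
  rw [hlaw]
  exact ⟨integrable_exp_mul_gaussianReal, fun t => by simp [mgf_id_gaussianReal]⟩

lemma exp_mul_iSup_abs_le_sum {ι : Type*} [Fintype ι] [Nonempty ι] (x : ι → ℝ) (t : ℝ) :
    exp (t * ⨆ i, |x i|) ≤ ∑ i, (exp (t * x i) + exp (-t * x i)) := by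
  obtain ⟨i, hi⟩ := exists_eq_ciSup_of_finite (f := fun i => |x i|)
  rw [← hi]
  calc exp (t * |x i|) ≤ exp (t * x i) + exp (-t * x i) := by
        rcases abs_cases (x i) with ⟨h, -⟩ | ⟨h, -⟩ <;> rw [h]
        · linarith [exp_pos (-t * x i)]
        · rw [mul_neg, ← neg_mul]; linarith [exp_pos (t * x i)]
    _ ≤ _ := Finset.single_le_sum (f := fun i => exp (t * x i) + exp (-t * x i))
        (fun j _ => by positivity) (Finset.mem_univ i)

lemma integrable_iSup_abs {Ω : Type*} [MeasurableSpace Ω] {P : Measure Ω} {ι : Type*}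
    [Fintype ι] {X : ι → Ω → ℝ} (hX : ∀ i, Integrable (X i) P) :
    Integrable (fun ω => ⨆ i, |X i ω|) P := by
  refine (integrable_finsetSum Finset.univ fun i _ => (hX i).abs).mono'
    (AEMeasurable.aestronglyMeasurable (AEMeasurable.iSup fun i => (hX i).aemeasurable.abs))
    (Eventually.of_forall fun ω => ?_)
  rw [Real.norm_of_nonneg (Real.iSup_nonneg fun i => abs_nonneg _)]
  cases isEmpty_or_nonempty ι
  · simp
  · exact ciSup_le fun i => Finset.single_le_sum (f := fun j => |X j ω|)
      (fun j _ => abs_nonneg _) (Finset.mem_univ i)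

lemma le_sqrt_of_forall_mul_le {a c L : ℝ} (hc : 0 ≤ c) (hL : 0 < L)
    (h : ∀ t > 0, t * a ≤ L + c * t ^ 2 / 2) : a ≤ √(2 * c * L) := by
  rcases hc.eq_or_lt with rfl | hc
  · by_contra! ha
    rw [mul_zero, zero_mul, sqrt_zero] at ha
    have := h (2 * L / a) (by positivity)
    rw [div_mul_cancel₀ _ ha.ne'] at this
    linarith
  · set s := √(2 * c * L)
    have hs : 0 < s := sqrt_pos.2 (by positivity)
    have hs2 : s ^ 2 = 2 * c * L := sq_sqrt (by positivity)
    -- the choice `t = s / c` balances the two terms of the bound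
    have := h (s / c) (by positivity)
    rw [div_pow, hs2] at this
    field_simp at this
    nlinarith

section SubgaussianMax

variable {Ω ι : Type*} [MeasurableSpace Ω] {P : Measure Ω} [IsProbabilityMeasure P]
  [Fintype ι] {X : ι → Ω → ℝ} {c : ℝ≥0}

lemma exp_mul_integral_iSup_abs_le (hX : ∀ i, HasSubgaussianMGF (X i) c P) [Nonempty ι]
    (t : ℝ) :
    exp (t * ∫ ω, ⨆ i, |X i ω| ∂P) ≤ 2 * Fintype.card ι * exp (c * t ^ 2 / 2) := by
  have hexp : ∀ s i, Integrable (fun ω => exp (s * X i ω)) P :=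
    fun s i => (hX i).integrable_exp_mul s
  have hsum : Integrable (fun ω => ∑ i, (exp (t * X i ω) + exp (-t * X i ω))) P :=
    integrable_finsetSum _ fun i _ => (hexp t i).add (hexp (-t) i)
  have hmax := integrable_iSup_abs fun i => (hX i).integrable
  have hexpmax : Integrable (fun ω => exp (t * ⨆ i, |X i ω|)) P :=
    hsum.mono' (continuous_exp.comp_aestronglyMeasurable (hmax.1.const_mul t))
      (Eventually.of_forall fun ω => by
        rw [Real.norm_of_nonneg (exp_pos _).le]; exact exp_mul_iSup_abs_le_sum _ t)
  calc exp (t * ∫ ω, ⨆ i, |X i ω| ∂P)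
      ≤ ∫ ω, exp (t * ⨆ i, |X i ω|) ∂P := by
        rw [← integral_const_mul]
        exact convexOn_exp.map_integral_le continuous_exp.continuousOn isClosed_univ
          (Eventually.of_forall fun _ => Set.mem_univ _) (hmax.const_mul t) hexpmax
    _ ≤ ∫ ω, ∑ i, (exp (t * X i ω) + exp (-t * X i ω)) ∂P :=
        integral_mono hexpmax hsum fun ω => exp_mul_iSup_abs_le_sum _ t
    _ = ∑ i, (mgf (X i) P t + mgf (X i) P (-t)) := by
        rw [integral_finsetSum (f := fun i ω => exp (t * X i ω) + exp (-t * X i ω)) _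
          fun i _ => (hexp t i).add (hexp (-t) i)]
        exact Finset.sum_congr rfl fun i _ => integral_add (hexp t i) (hexp (-t) i)
    _ ≤ ∑ _i : ι, (exp (c * t ^ 2 / 2) + exp (c * (-t) ^ 2 / 2)) :=
        Finset.sum_le_sum fun i _ => add_le_add ((hX i).mgf_le t) ((hX i).mgf_le (-t))
    _ = 2 * Fintype.card ι * exp (c * t ^ 2 / 2) := by
        simp only [neg_sq, Finset.sum_const, Finset.card_univ, nsmul_eq_mul]; ring

theorem integral_iSup_abs_le_of_hasSubgaussianMGF (hX : ∀ i, HasSubgaussianMGF (X i) c P) :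
    ∫ ω, ⨆ i, |X i ω| ∂P ≤ √(2 * c * log (2 * Fintype.card ι)) := by
  cases isEmpty_or_nonempty ι
  · simp
  have hlog : 0 < log (2 * Fintype.card ι) :=
    log_pos (by norm_cast; linarith [Fintype.card_pos (α := ι)])
  refine le_sqrt_of_forall_mul_le c.2 hlog fun t _ => ?_
  rw [← exp_le_exp, exp_add, exp_log (by positivity)]
  exact exp_mul_integral_iSup_abs_le hX t

end SubgaussianMax

lemma EuclideanSpace.norm_le_sqrt_card_mul_iSup_abs {κ : Type*} [Fintype κ]
    (x : EuclideanSpace ℝ κ) : ‖x‖ ≤ √(Fintype.card κ) * ⨆ k, |x k| := by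
  simpa using (EuclideanSpace.basisFun κ ℝ).norm_le_card_mul_iSup_norm_inner x

lemma iSup_norm_le_sqrt_card_mul_iSup_abs {ι κ : Type*} [Finite ι] [Fintype κ]
    (x : ι → EuclideanSpace ℝ κ) :
    ⨆ i, ‖x i‖ ≤ √(Fintype.card κ) * ⨆ p : ι × κ, |x p.1 p.2| := by
  have hbdd : BddAbove (Set.range fun p : ι × κ => |x p.1 p.2|) := Set.finite_range _ |>.bddAbove
  have hnonneg : 0 ≤ ⨆ p : ι × κ, |x p.1 p.2| := Real.iSup_nonneg fun _ => abs_nonneg _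
  refine Real.iSup_le (fun i => (EuclideanSpace.norm_le_sqrt_card_mul_iSup_abs (x i)).trans ?_)
    (by positivity)
  gcongr
  exact Real.iSup_le (fun k => le_ciSup hbdd (i, k)) hnonneg

section SubgaussianVectors

variable {Ω ι κ : Type*} [MeasurableSpace Ω] {P : Measure Ω} [IsProbabilityMeasure P]
  [Fintype ι] [Nonempty ι] [Fintype κ] {ξ : ι → Ω → EuclideanSpace ℝ κ} {c : ℝ≥0}

theorem integral_iSup_add_mul_norm_le_of_hasSubgaussianMGF
    (hξ : ∀ i k, HasSubgaussianMGF (fun ω => ξ i ω k) c P) {β s : ℝ} (hβ : 0 ≤ β) (hs : 0 ≤ s) :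
    ∫ ω, ⨆ i, (β + s * ‖ξ i ω‖) ∂P
      ≤ β + s * √(Fintype.card κ) * √(2 * c * log (2 * (Fintype.card ι * Fintype.card κ))) := by
  set Z : Ω → ℝ := fun ω => ⨆ p : ι × κ, |ξ p.1 ω p.2|
  have hZ : Integrable Z P := integrable_iSup_abs fun p => (hξ p.1 p.2).integrable
  have hpointwise : ∀ ω, ⨆ i, (β + s * ‖ξ i ω‖) ≤ β + s * √(Fintype.card κ) * Z ω := fun ω => by
    have hbdd : BddAbove (Set.range fun i => ‖ξ i ω‖) := Set.finite_range _ |>.bddAbove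
    refine ciSup_le fun i => ?_
    rw [mul_assoc]
    gcongr
    exact (le_ciSup hbdd i).trans (iSup_norm_le_sqrt_card_mul_iSup_abs (ξ · ω))
  calc ∫ ω, ⨆ i, (β + s * ‖ξ i ω‖) ∂P
      ≤ ∫ ω, (β + s * √(Fintype.card κ) * Z ω) ∂P :=
        integral_mono_of_nonneg
          (Eventually.of_forall fun ω => Real.iSup_nonneg fun i => by positivity)
          ((integrable_const β).add (hZ.const_mul _)) (Eventually.of_forall hpointwise)
    _ = β + s * √(Fintype.card κ) * ∫ ω, Z ω ∂P := by
        rw [integral_add (integrable_const β) (hZ.const_mul _), integral_const_mul]; simp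
    _ ≤ _ := by
        gcongr
        simpa [Z] using integral_iSup_abs_le_of_hasSubgaussianMGF (P := P)
          (X := fun p : ι × κ => fun ω => ξ p.1 ω p.2) fun p => hξ p.1 p.2

end SubgaussianVectors

lemma norm_add_apply_sub_add_apply_le {E F : Type*} [NormedAddCommGroup E] [NormedSpace ℝ E]
    [NormedAddCommGroup F] [NormedSpace ℝ F] (u u' : F) (S S' : E →L[ℝ] F) (e : E) :
    ‖(u + S e) - (u' + S' e)‖ ≤ ‖u - u'‖ + ‖S - S'‖ * ‖e‖ :=
  calc ‖(u + S e) - (u' + S' e)‖ = ‖(u - u') + (S - S') e‖ := by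
        rw [sub_apply]; congr 1; abel
    _ ≤ ‖u - u'‖ + ‖S - S'‖ * ‖e‖ :=
        (norm_add_le _ _).trans (by gcongr; exact (S - S').le_opNorm e)

lemma Real.isBigO_log_const_mul (a : ℝ) : (fun x => log (a * x)) =O[atTop] log := by
  rcases eq_or_ne a 0 with rfl | ha
  · simpa using isBigO_zero log atTop
  have hconst : (fun _ => log a) =O[atTop] log :=
    (isLittleO_const_left.2 <| Or.inr <| tendsto_norm_atTop_atTop.comp tendsto_log_atTop).isBigO
  refine (hconst.add (isBigO_refl log atTop)).congr' ?_ EventuallyEq.rfl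
  filter_upwards [eventually_ne_atTop 0] with x hx
  exact (log_mul ha hx).symm

lemma isBigO_const_add_mul_sqrt_log_const_mul (β γ a : ℝ) :
    (fun M : ℕ => β + γ * √(2 * log (a * M))) =O[atTop] fun M : ℕ => √(log M) := by
  have hlog : Tendsto (fun M : ℕ => log M) atTop atTop :=
    tendsto_log_atTop.comp tendsto_natCast_atTop_atTop
  have hconst : (fun _ : ℕ => β) =O[atTop] fun M : ℕ => √(log M) :=
    (isLittleO_const_left.2 <| Or.inr <|
      tendsto_norm_atTop_atTop.comp (tendsto_sqrt_atTop.comp hlog)).isBigO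
  have hlog_nonneg : ∀ᶠ M : ℕ in atTop, 0 ≤ log M := hlog.eventually_ge_atTop 0
  have hsqrt : (fun M : ℕ => √(2 * log (a * M))) =O[atTop] fun M : ℕ => √(log M) :=
    (((Real.isBigO_log_const_mul a).comp_tendsto tendsto_natCast_atTop_atTop).const_mul_left
      2).sqrt hlog_nonneg
  exact hconst.add (hsqrt.const_mul_left γ)

theorem rho_gaussian_bound_general
    {d q : ℕ}
    -- drift and diffusion coefficients, Lipschitz in (x,a)
    (b : Sp d → Sp q → Sp d) (σm : Sp d → Sp q → (Sp d →L[ℝ] Sp d))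
    (bL σL : ℝ) (hbL : 0 ≤ bL) (hσL : 0 ≤ σL)
    (hb_lip : ∀ x a x' a', ‖b x a - b x' a'‖ ≤ bL * (‖x - x'‖ + ‖a - a'‖))
    (hσ_lip : ∀ x a x' a', ‖σm x a - σm x' a'‖ ≤ σL * (‖x - x'‖ + ‖a - a'‖))
    -- the dynamics
    (F : Sp d → Sp q → Sp d → Sp d)
    (hF : ∀ x a e, F x a e = b x a + σm x a e)
    -- i.i.d. noise ε^m ∼ N(0, I_d): independent standard Gaussian coordinates
    {Ω : Type*} [MeasurableSpace Ω] (P : Measure Ω) [IsProbabilityMeasure P]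
    (eps : ℕ → Ω → Sp d)
    (h_meas : ∀ m, Measurable (eps m))
    (h_law : ∀ (m : ℕ) (i : Fin d),
      Measure.map (fun ω => eps m ω i) P = gaussianReal 0 1) :
    -- (HF) holds with C(ε) = [b]_L + [σ]_L ‖ε‖_d
    (∀ (x x' : Sp d) (a a' : Sp q) (e : Sp d),
      ‖F x a e - F x' a' e‖ ≤ (bL + σL * ‖e‖) * (‖x - x'‖ + ‖a - a'‖))
    ∧
    -- ρ_M ≤ [b]_L + d [σ]_L √(2 log(2 d M))
    (∀ M : ℕ, 1 ≤ M →
      ∫ ω, (⨆ m : Fin M, (bL + σL * ‖eps m ω‖)) ∂P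
        ≤ bL + d * σL * Real.sqrt (2 * Real.log (2 * d * M)))
    ∧
    -- in particular ρ_M = O(√(log M)) as M → ∞
    ((fun M : ℕ => ∫ ω, (⨆ m : Fin M, (bL + σL * ‖eps m ω‖)) ∂P)
      =O[atTop] fun M : ℕ => Real.sqrt (Real.log M)) := by
  have hgauss : ∀ (m : ℕ) (i : Fin d), HasSubgaussianMGF (fun ω => eps m ω i) 1 P :=
    fun m i => hasSubgaussianMGF_of_map_eq_gaussianReal (by fun_prop) (by simpa using h_law m i)
  have hρ : ∀ M : ℕ, 1 ≤ M → ∫ ω, (⨆ m : Fin M, (bL + σL * ‖eps m ω‖)) ∂P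
      ≤ bL + d * σL * Real.sqrt (2 * Real.log (2 * d * M)) := fun M hM => by
    have : Nonempty (Fin M) := Fin.pos_iff_nonempty.1 hM
    have hsqrt_d : √(d : ℝ) ≤ d := by
      rw [sqrt_le_left (Nat.cast_nonneg d)]; exact_mod_cast Nat.le_self_pow two_ne_zero d
    refine (integral_iSup_add_mul_norm_le_of_hasSubgaussianMGF (ξ := fun m : Fin M => eps m)
      (fun m => hgauss m) hbL hσL).trans ?_
    simp only [Fintype.card_fin, NNReal.coe_one, mul_one, mul_comm (M : ℝ)]
    rw [mul_comm (d : ℝ) σL, ← mul_assoc]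
    gcongr
  refine ⟨fun x x' a a' e => ?_, hρ, ?_⟩
  · rw [hF, hF]
    refine (norm_add_apply_sub_add_apply_le _ _ _ _ e).trans ?_
    have := hb_lip x a x' a'
    have := mul_le_mul_of_nonneg_right (hσ_lip x a x' a') (norm_nonneg e)
    linarith
  · refine IsBigO.trans ?_ (isBigO_const_add_mul_sqrt_log_const_mul bL (d * σL) (2 * d))
    refine IsBigO.of_bound' (eventually_ge_atTop 1 |>.mono fun M hM => ?_)
    rw [norm_of_nonneg (integral_nonneg fun ω => Real.iSup_nonneg fun m => by positivity)]
    exact (hρ M hM).trans (le_abs_self _)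

/-- **(HF) and the bound on `ρ_M` for Gaussian-driven Euler dynamics** (Remark 4.2).
If `F(x,a,ε) = b(x,a) + σ(x,a)ε` with `b`, `σ` Lipschitz in `(x,a)` with constants
`[b]_L`, `[σ]_L`, and `ε ∼ N(0, I_d)`, then (HF) holds with
`C(ε) = [b]_L + [σ]_L ‖ε‖_d`, and
`ρ_M = E[sup_{1≤m≤M} C(ε^m)] ≤ [b]_L + d [σ]_L √(2 log(2dM))`;
in particular `ρ_M = O(√(log M))` as `M → ∞`. -/
theorem rho_gaussian_bound
    {d q : ℕ} (hd : 0 < d)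
    -- drift and diffusion coefficients, Lipschitz in (x,a)
    (b : Sp d → Sp q → Sp d) (σm : Sp d → Sp q → (Sp d →L[ℝ] Sp d))
    (bL σL : ℝ) (hbL : 0 ≤ bL) (hσL : 0 ≤ σL)
    (hb_lip : ∀ x a x' a', ‖b x a - b x' a'‖ ≤ bL * (‖x - x'‖ + ‖a - a'‖))
    (hσ_lip : ∀ x a x' a', ‖σm x a - σm x' a'‖ ≤ σL * (‖x - x'‖ + ‖a - a'‖))
    -- the dynamics
    (F : Sp d → Sp q → Sp d → Sp d)
    (hF : ∀ x a e, F x a e = b x a + σm x a e)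
    -- i.i.d. noise ε^m ∼ N(0, I_d): independent standard Gaussian coordinates
    {Ω : Type*} [MeasurableSpace Ω] (P : Measure Ω) [IsProbabilityMeasure P]
    (eps : ℕ → Ω → Sp d)
    (h_meas : ∀ m, Measurable (eps m))
    (h_law : ∀ (m : ℕ) (i : Fin d),
      Measure.map (fun ω => eps m ω i) P = gaussianReal 0 1)
    (h_indep : iIndepFun
      (fun (mi : ℕ × Fin d) ω => eps mi.1 ω mi.2) P) :
    -- (HF) holds with C(ε) = [b]_L + [σ]_L ‖ε‖_d
    (∀ (x x' : Sp d) (a a' : Sp q) (e : Sp d),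
      ‖F x a e - F x' a' e‖ ≤ (bL + σL * ‖e‖) * (‖x - x'‖ + ‖a - a'‖))
    ∧
    -- ρ_M ≤ [b]_L + d [σ]_L √(2 log(2 d M))
    (∀ M : ℕ, 1 ≤ M →
      ∫ ω, (⨆ m : Fin M, (bL + σL * ‖eps m ω‖)) ∂P
        ≤ bL + d * σL * Real.sqrt (2 * Real.log (2 * d * M)))
    ∧
    -- in particular ρ_M = O(√(log M)) as M → ∞
    ((fun M : ℕ => ∫ ω, (⨆ m : Fin M, (bL + σL * ‖eps m ω‖)) ∂P)
      =O[atTop] fun M : ℕ => Real.sqrt (Real.log M)) :=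
  rho_gaussian_bound_general b σm bL σL hbL hσL hb_lip hσ_lip F hF P eps h_meas h_law
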